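/- Let G = (V, ω, μ) be a locally finite connected weighted graph with D_μ < ∞, Ω ⊆ V a nonempty finite subset with nonempty interior Ω°, and α > 0. Suppose a : Ω° → ℝ is bounded, nonnegative and not identically zero and satisfies ∑_{x∈Ω°} μ(x) a(x) φ₁(x) > λ₁^{1/α}. Then every solution of the Dirichlet problem ∂_t u(t,x) = Δ_Ω u(t,x) + u(t,x)^{1+α} on (0,∞) × Ω°, u(0,x) = a(x) on Ω°, u(t,x) = 0 on [0,∞) × ∂Ω, blows up in a finite time; i.e., there is no such solution defined for all t ∈ [0,∞). -/

import Mathlib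

/-!
Solutions stay nonnegative: with `L` a bound for `|u|^α` on `[0, T] × Ω`, a negative minimum of
`e^{-(L+1)t} u` over `[0, T] × Ω°` would sit at a time where its derivative is `≤ 0`, while the
equation (and `Δ_Ω u ≥ 0` at a minimum) forces it to be `> 0`.

Testing the equation against `φ₁`, the symmetry of `Δ_Ω` and Jensen's inequality for the
probability weights `μ φ₁` give `J(t) = ∑ μ φ₁ u(t)` the inequality `J' ≥ -λ₁ J + J^{1+α}`.
Then `H = J^{-α}` satisfies `H' ≤ α λ₁ (H - 1/λ₁)`, so `H - 1/λ₁`, negative at `t = 0` because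
`J(0)^α > λ₁`, tends to `-∞` exponentially, contradicting `H > 0`.
-/

open Set

/-- The μ-Laplacian on a weighted graph; for `x` in the interior of a finite set `Ω`
and functions vanishing on `∂Ω` this is the Dirichlet Laplacian `Δ_Ω`. -/
noncomputable def graphLap {V : Type*} (ω : V → V → ℝ) (μ : V → ℝ)
    (h : V → ℝ) (x : V) : ℝ :=
  (∑' y, ω x y * (h y - h x)) / μ x

open Classical in
/-- The boundary `∂Ω = {x ∈ Ω : ∃ y ∉ Ω, y ~ x}` of a finite subset of a weighted graph. -/
noncomputable def graphBoundary {V : Type*} (ω : V → V → ℝ) (Ω : Finset V) : Finset V :=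
  Ω.filter fun x => ∃ y ∉ Ω, 0 < ω x y

open Classical in
/-- The interior `Ω° = Ω \ ∂Ω` of a finite subset of a weighted graph: the points of `Ω`
all of whose neighbours lie in `Ω`. -/
noncomputable def graphInterior {V : Type*} (ω : V → V → ℝ) (Ω : Finset V) : Finset V :=
  Ω.filter fun x => ∀ y, 0 < ω x y → y ∈ Ω

open Filter Real Topology

theorem HasDerivAt.nonpos_of_isMinOn_Icc_right {f : ℝ → ℝ} {f' a b : ℝ}
    (hd : HasDerivAt f f' b) (hab : a < b) (hmin : IsMinOn f (Icc a b) b) : f' ≤ 0 := by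
  have hslope : Tendsto (slope f b) (𝓝[<] b) (𝓝 f') :=
    (hasDerivAt_iff_tendsto_slope.mp hd).mono_left (nhdsWithin_mono _ fun _ hs => ne_of_lt hs)
  refine le_of_tendsto hslope ?_
  filter_upwards [Ioo_mem_nhdsLT hab] with s hs
  rw [slope_def_field]
  exact div_nonpos_of_nonneg_of_nonpos (sub_nonneg.2 (hmin ⟨hs.1.le, hs.2.le⟩))
    (sub_neg.2 hs.2).le

theorem le_mul_exp_of_hasDerivAt_le_mul {f f' : ℝ → ℝ} {c t : ℝ}
    (hcont : ContinuousOn f (Ici 0)) (hderiv : ∀ s > 0, HasDerivAt f (f' s) s)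
    (hle : ∀ s > 0, f' s ≤ c * f s) (ht : 0 ≤ t) :
    f t ≤ f 0 * exp (c * t) := by
  have hanti : AntitoneOn (fun s => f s * exp (-c * s)) (Ici 0) := by
    refine antitoneOn_of_hasDerivWithinAt_nonpos (convex_Ici 0)
      (hcont.mul (by fun_prop)) (f' := fun s => exp (-c * s) * (f' s - c * f s)) ?_ ?_
    all_goals rw [interior_Ici]; intro s hs
    · exact ((hderiv s hs).fun_mul ((hasDerivAt_id' s).const_mul (-c)).exp).hasDerivWithinAt
        |>.congr_deriv (by ring)
    · exact mul_nonpos_of_nonneg_of_nonpos (exp_pos _).le (sub_nonpos.2 (hle s hs))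
  have h := hanti self_mem_Ici ht ht
  simp only [mul_zero, exp_zero, mul_one] at h
  calc f t = f t * exp (-c * t) * exp (c * t) := by rw [mul_assoc, ← exp_add]; simp
    _ ≤ f 0 * exp (c * t) := by gcongr

theorem neg_rpow_mul_abs_le_rpow_one_add {x C α : ℝ} (hα : 0 ≤ α) (hx : |x| ≤ C) :
    -(C ^ α * |x|) ≤ x ^ (1 + α) := by
  rw [neg_le]
  calc -x ^ (1 + α) ≤ |x ^ (1 + α)| := neg_le_abs _
    _ ≤ |x| ^ (1 + α) := abs_rpow_le_abs_rpow _ _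
    _ = |x| * |x| ^ α := rpow_one_add' (abs_nonneg x) (by positivity)
    _ ≤ C ^ α * |x| := by
      rw [mul_comm]; gcongr

section Graph

variable {V : Type*} {ω : V → V → ℝ} {μ : V → ℝ} {Ω : Finset V}

theorem graphInterior_subset : graphInterior ω Ω ⊆ Ω := by
  classical exact Finset.filter_subset _ _

theorem mem_of_mem_graphInterior {x y : V} (hx : x ∈ graphInterior ω Ω) (hxy : 0 < ω x y) :
    y ∈ Ω := by
  classical exact (Finset.mem_filter.1 hx).2 y hxy

theorem mem_graphBoundary_of_notMem_graphInterior {x : V} (hx : x ∈ Ω)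
    (hx' : x ∉ graphInterior ω Ω) : x ∈ graphBoundary ω Ω := by
  simp only [graphInterior, graphBoundary, Finset.mem_filter, not_and, not_forall] at hx' ⊢
  obtain ⟨y, hxy, hy⟩ := hx' hx
  exact ⟨hx, y, hy, hxy⟩

theorem graphLap_nonneg_of_forall_le (hwnn : ∀ x y, 0 ≤ ω x y) {f : V → ℝ} {x : V}
    (hμ : 0 ≤ μ x) (hf : ∀ y, 0 < ω x y → f x ≤ f y) : 0 ≤ graphLap ω μ f x := by
  refine div_nonneg (tsum_nonneg fun y => ?_) hμ
  rcases (hwnn x y).lt_or_eq with hxy | hxy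
  · exact mul_nonneg hxy.le (sub_nonneg.2 (hf y hxy))
  · simp [← hxy]

theorem mul_graphLap_eq_sum (hwnn : ∀ x y, 0 ≤ ω x y) {x : V} (hx : x ∈ graphInterior ω Ω)
    (hμ : μ x ≠ 0) (f : V → ℝ) :
    μ x * graphLap ω μ f x = ∑ y ∈ Ω, ω x y * (f y - f x) := by
  rw [graphLap, mul_div_cancel₀ _ hμ]
  refine tsum_eq_sum fun y hy => ?_
  have : ω x y = 0 :=
    ((hwnn x y).eq_or_lt.resolve_right fun h => hy (mem_of_mem_graphInterior hx h)).symm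
  simp [this]

theorem sum_graphInterior_mul_graphLap_comm (hsymm : ∀ x y, ω x y = ω y x)
    (hwnn : ∀ x y, 0 ≤ ω x y) (hμ : ∀ x, μ x ≠ 0) {f g : V → ℝ}
    (hf : ∀ x ∈ Ω, x ∉ graphInterior ω Ω → f x = 0)
    (hg : ∀ x ∉ graphInterior ω Ω, g x = 0) :
    ∑ x ∈ graphInterior ω Ω, g x * (μ x * graphLap ω μ f x)
      = ∑ x ∈ graphInterior ω Ω, f x * (μ x * graphLap ω μ g x) := by
  set I := graphInterior ω Ω
  set S : V → V → ℝ := fun x y => ω x y * (g x * f y - f x * g y)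
  have hrow : ∀ x ∈ I, g x * (μ x * graphLap ω μ f x) - f x * (μ x * graphLap ω μ g x)
      = ∑ y ∈ I, S x y := by
    intro x hx
    rw [mul_graphLap_eq_sum hwnn hx (hμ x), mul_graphLap_eq_sum hwnn hx (hμ x),
      Finset.mul_sum, Finset.mul_sum, ← Finset.sum_sub_distrib]
    refine (Finset.sum_subset graphInterior_subset fun y hy hyI => ?_).symm.trans
      (Finset.sum_congr rfl fun y _ => by ring)
    rw [hf y hy hyI, hg y hyI]; ring
  have hanti : ∑ x ∈ I, ∑ y ∈ I, S x y = 0 := by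
    have hswap : ∑ x ∈ I, ∑ y ∈ I, S x y = ∑ x ∈ I, ∑ y ∈ I, -S x y := by
      rw [Finset.sum_comm]
      exact Finset.sum_congr rfl fun x _ => Finset.sum_congr rfl fun y _ => by
        simp only [S, hsymm y x]; ring
    simp only [Finset.sum_neg_distrib] at hswap
    linarith
  rw [← sub_eq_zero, ← Finset.sum_sub_distrib, Finset.sum_congr rfl hrow, hanti]

theorem sum_mul_graphLap_of_eigenfunction (hsymm : ∀ x y, ω x y = ω y x)
    (hwnn : ∀ x y, 0 ≤ ω x y) (hμ : ∀ x, μ x ≠ 0) {φ f : V → ℝ} {lam : ℝ}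
    (hφ : ∀ x ∉ graphInterior ω Ω, φ x = 0)
    (hφ_eig : ∀ x ∈ graphInterior ω Ω, graphLap ω μ φ x = -lam * φ x)
    (hf : ∀ x ∈ Ω, x ∉ graphInterior ω Ω → f x = 0) :
    ∑ x ∈ graphInterior ω Ω, μ x * φ x * graphLap ω μ f x
      = -lam * ∑ x ∈ graphInterior ω Ω, μ x * φ x * f x := by
  calc ∑ x ∈ graphInterior ω Ω, μ x * φ x * graphLap ω μ f x
      = ∑ x ∈ graphInterior ω Ω, φ x * (μ x * graphLap ω μ f x) :=
        Finset.sum_congr rfl fun x _ => by ring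
    _ = ∑ x ∈ graphInterior ω Ω, f x * (μ x * graphLap ω μ φ x) :=
        sum_graphInterior_mul_graphLap_comm hsymm hwnn hμ hf hφ
    _ = -lam * ∑ x ∈ graphInterior ω Ω, μ x * φ x * f x := by
        rw [Finset.mul_sum]
        exact Finset.sum_congr rfl fun x hx => by rw [hφ_eig x hx]; ring

theorem graph_minimum_principle (hwnn : ∀ x y, 0 ≤ ω x y) (hμ : ∀ x, 0 ≤ μ x)
    {I : Finset V} {u u' : ℝ → V → ℝ} {T L : ℝ}
    (hcont : ∀ x ∈ I, ContinuousOn (fun t => u t x) (Icc 0 T))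
    (hderiv : ∀ x ∈ I, ∀ t ∈ Ioc 0 T, HasDerivAt (fun s => u s x) (u' t x) t)
    (hout : ∀ t ∈ Ioc 0 T, ∀ x ∈ I, ∀ y ∉ I, 0 < ω x y → 0 ≤ u t y)
    (hsuper : ∀ t ∈ Ioc 0 T, ∀ x ∈ I, u t x < 0 →
      graphLap ω μ (u t) x + L * u t x ≤ u' t x)
    (hinit : ∀ x ∈ I, 0 ≤ u 0 x) :
    ∀ t ∈ Icc 0 T, ∀ x ∈ I, 0 ≤ u t x := by
  intro t₁ ht₁ x₁ hx₁
  by_contra! hneg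
  have hI : I.Nonempty := ⟨x₁, hx₁⟩
  set w : ℝ → V → ℝ := fun s x => u s x * exp (-(L + 1) * s)
  have hm : ContinuousOn (fun s => I.inf' hI fun x => w s x) (Icc 0 T) :=
    ContinuousOn.finset_inf'_apply hI fun x hx => (hcont x hx).mul (by fun_prop)
  obtain ⟨t₀, ht₀, hmin⟩ := isCompact_Icc.exists_isMinOn ⟨t₁, ht₁⟩ hm
  obtain ⟨x₀, hx₀, hm₀⟩ := Finset.exists_mem_eq_inf' hI fun x => w t₀ x
  have hw_le : ∀ s ∈ Icc 0 T, ∀ x ∈ I, w t₀ x₀ ≤ w s x := fun s hs x hx =>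
    hm₀ ▸ (hmin hs).trans (Finset.inf'_le _ hx)
  have hw₀ : w t₀ x₀ < 0 :=
    (hw_le t₁ ht₁ x₁ hx₁).trans_lt (mul_neg_of_neg_of_pos hneg (exp_pos _))
  have hu₀ : u t₀ x₀ < 0 := neg_of_mul_neg_left hw₀ (exp_pos _).le
  have ht₀pos : 0 < t₀ := ht₀.1.lt_of_ne <| by
    rintro rfl
    exact hu₀.not_ge (hinit x₀ hx₀)
  have ht₀' : t₀ ∈ Ioc 0 T := ⟨ht₀pos, ht₀.2⟩
  have hlap : 0 ≤ graphLap ω μ (u t₀) x₀ :=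
    graphLap_nonneg_of_forall_le hwnn (hμ x₀) fun y hy => by
      by_cases hyI : y ∈ I
      · exact le_of_mul_le_mul_right (hw_le t₀ ht₀ y hyI) (exp_pos _)
      · exact hu₀.le.trans (hout t₀ ht₀' x₀ hx₀ y hyI hy)
  have hdw : HasDerivAt (fun s => w s x₀)
      (exp (-(L + 1) * t₀) * (u' t₀ x₀ - (L + 1) * u t₀ x₀)) t₀ :=
    ((hderiv x₀ hx₀ t₀ ht₀').fun_mul ((hasDerivAt_id' t₀).const_mul _).exp).congr_deriv
      (by ring)
  have hdw_nonpos := hdw.nonpos_of_isMinOn_Icc_right ht₀pos fun s hs =>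
    hw_le s ⟨hs.1, hs.2.trans ht₀.2⟩ x₀ hx₀
  have hsuper₀ := hsuper t₀ ht₀' x₀ hx₀ hu₀
  nlinarith [exp_pos (-(L + 1) * t₀)]

theorem graphInterior_nonneg_of_solution (hwnn : ∀ x y, 0 ≤ ω x y) (hμ : ∀ x, 0 ≤ μ x)
    {α : ℝ} (hα : 0 ≤ α) {u u' : ℝ → V → ℝ}
    (hcont : ∀ x ∈ Ω, ContinuousOn (fun t => u t x) (Ici 0))
    (hderiv : ∀ x ∈ Ω, ∀ t > 0, HasDerivAt (fun s => u s x) (u' t x) t)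
    (hbdd : ∀ T > 0, ∃ C, ∀ t ∈ Icc 0 T, ∀ x ∈ Ω, |u t x| ≤ C)
    (heq : ∀ t > 0, ∀ x ∈ graphInterior ω Ω,
      u' t x = graphLap ω μ (u t) x + u t x ^ (1 + α))
    (hinit : ∀ x ∈ graphInterior ω Ω, 0 ≤ u 0 x)
    (hzero : ∀ t ≥ 0, ∀ x ∈ Ω, x ∉ graphInterior ω Ω → u t x = 0) :
    ∀ t ≥ 0, ∀ x ∈ graphInterior ω Ω, 0 ≤ u t x := by
  intro t ht
  obtain ⟨C, hC⟩ := hbdd (t + 1) (by linarith)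
  refine graph_minimum_principle (T := t + 1) (L := C ^ α) hwnn hμ
    (fun x hx => (hcont x (graphInterior_subset hx)).mono Icc_subset_Ici_self)
    (fun x hx s hs => hderiv x (graphInterior_subset hx) s hs.1)
    (fun s hs x hx y hy hxy => (hzero s hs.1.le y (mem_of_mem_graphInterior hx hxy) hy).ge)
    (fun s hs x hx hux => ?_) hinit t ⟨ht, by linarith⟩
  have hreact := neg_rpow_mul_abs_le_rpow_one_add hα
    (hC s (Ioc_subset_Icc_self hs) x (graphInterior_subset hx))
  rw [abs_of_neg hux] at hreact
  rw [heq s hs.1 x hx]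
  linarith

end Graph

theorem apply_zero_le_rpow_of_global_supersolution {J J' : ℝ → ℝ} {lam α : ℝ}
    (hlam : 0 < lam) (hα : 0 < α) (hcont : ContinuousOn J (Ici 0))
    (hderiv : ∀ t > 0, HasDerivAt J (J' t) t)
    (hnonneg : ∀ t ≥ 0, 0 ≤ J t) (hsuper : ∀ t > 0, -lam * J t + J t ^ (1 + α) ≤ J' t) :
    J 0 ≤ lam ^ (1 / α) := by
  by_contra! hJ0
  have hpos : ∀ t ≥ 0, 0 < J t := by
    intro t ht
    have hdecay := le_mul_exp_of_hasDerivAt_le_mul (f := fun s => -J s) (c := -lam) hcont.neg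
      (fun s hs => (hderiv s hs).neg) (fun s hs => by
        linarith [hsuper s hs, rpow_nonneg (hnonneg s hs.le) (1 + α)]) ht
    nlinarith [exp_pos (-lam * t), (rpow_pos_of_pos hlam (1 / α)).trans hJ0]
  set H : ℝ → ℝ := fun t => J t ^ (-α)
  have hH' : ∀ t > 0, J' t * (-α) * J t ^ (-α - 1) ≤ α * lam * (H t - 1 / lam) := by
    intro t ht
    have hJ := hpos t ht.le
    have hP := rpow_pos_of_pos hJ α
    have hkey : α * lam * (H t - 1 / lam) - J' t * (-α) * J t ^ (-α - 1)
        = α / (J t * J t ^ α) * (J' t - (-lam * J t + J t ^ (1 + α))) := by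
      simp only [H, rpow_sub_one hJ.ne', rpow_neg hJ.le,
        rpow_one_add' (y := α) hJ.le (by positivity)]
      field_simp
      ring
    have hfactor : 0 ≤ α / (J t * J t ^ α) := by positivity
    linarith [mul_nonneg hfactor (sub_nonneg.2 (hsuper t ht))]
  have hH0 : H 0 < 1 / lam := by
    have hlt : lam < J 0 ^ α := by
      simpa [← rpow_mul hlam.le, hα.ne'] using
        rpow_lt_rpow (rpow_pos_of_pos hlam _).le hJ0 hα
    simpa [H, rpow_neg (hpos 0 le_rfl).le] using inv_strictAnti₀ hlam hlt
  have hgrowth : Tendsto (fun t => (1 / lam - H 0) * exp (α * lam * t)) atTop atTop :=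
    (tendsto_exp_atTop.comp (tendsto_id.const_mul_atTop (by positivity))).const_mul_atTop
      (by linarith)
  obtain ⟨t, hbig, ht⟩ :=
    ((hgrowth.eventually_gt_atTop (1 / lam)).and (eventually_ge_atTop 0)).exists
  have hHt := le_mul_exp_of_hasDerivAt_le_mul (f := fun t => H t - 1 / lam) (c := α * lam)
    ((hcont.rpow_const fun s hs => Or.inl (hpos s hs).ne').sub continuousOn_const)
    (fun s hs => ((hderiv s hs).rpow_const (Or.inl (hpos s hs.le).ne')).sub_const _) hH' ht
  have hHpos := rpow_pos_of_pos (hpos t ht) (-α)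
  simp only [H] at hHt hbig
  nlinarith

theorem blowup_dirichlet_power_general
    {V : Type*} (ω : V → V → ℝ) (μ : V → ℝ)
    (hsymm : ∀ x y, ω x y = ω y x)
    (hwnn : ∀ x y, 0 ≤ ω x y)
    (hμpos : ∀ x, 0 < μ x)
    (Ω : Finset V)
    (α : ℝ) (hα : 0 < α)
    -- the initial datum
    (a : V → ℝ)
    (ha_nonneg : ∀ x ∈ graphInterior ω Ω, 0 ≤ a x)
    -- `λ₁`, the smallest eigenvalue of `−Δ_Ω`, with positive normalized eigenfunction `φ₁`
    (lam₁ : ℝ) (hlam₁_pos : 0 < lam₁)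
    (φ₁ : V → ℝ)
    (hφ₁_pos : ∀ x ∈ graphInterior ω Ω, 0 < φ₁ x)
    (hφ₁_zero : ∀ x ∉ graphInterior ω Ω, φ₁ x = 0)
    (hφ₁_norm : ∑ x ∈ graphInterior ω Ω, μ x * φ₁ x = 1)
    (hφ₁_eig : ∀ x ∈ graphInterior ω Ω, graphLap ω μ φ₁ x = -lam₁ * φ₁ x)
    -- the largeness condition on the initial datum
    (hbig : lam₁ ^ (1 / α) < ∑ x ∈ graphInterior ω Ω, μ x * a x * φ₁ x) :
    -- conclusion: no global solution of the Dirichlet problem exists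
    ¬ ∃ (u u' : ℝ → V → ℝ),
        (∀ x ∈ Ω, ContinuousOn (fun t => u t x) (Ici (0:ℝ))) ∧
        (∀ x ∈ Ω, ∀ t > (0:ℝ), HasDerivAt (fun s => u s x) (u' t x) t) ∧
        (∀ T > (0:ℝ), ∃ C, ∀ t ∈ Icc (0:ℝ) T, ∀ x ∈ Ω, |u t x| ≤ C) ∧
        (∀ t > (0:ℝ), ∀ x ∈ graphInterior ω Ω,
          u' t x = graphLap ω μ (u t) x + u t x ^ (1 + α)) ∧
        (∀ x ∈ graphInterior ω Ω, u 0 x = a x) ∧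
        (∀ t ≥ (0:ℝ), ∀ x ∈ graphBoundary ω Ω, u t x = 0) := by
  rintro ⟨u, u', hcont, hderiv, hbdd, heq, hinit, hbc⟩
  set I := graphInterior ω Ω
  have hzero : ∀ t ≥ 0, ∀ x ∈ Ω, x ∉ I → u t x = 0 := fun t ht x hx hxI =>
    hbc t ht x (mem_graphBoundary_of_notMem_graphInterior hx hxI)
  have hnonneg := graphInterior_nonneg_of_solution hwnn (fun x => (hμpos x).le) hα.le hcont
    hderiv hbdd heq (fun x hx => hinit x hx ▸ ha_nonneg x hx) hzero
  have hweight : ∀ x ∈ I, 0 ≤ μ x * φ₁ x := fun x hx =>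
    (mul_pos (hμpos x) (hφ₁_pos x hx)).le
  set J : ℝ → ℝ := fun t => ∑ x ∈ I, μ x * φ₁ x * u t x
  have hsuper : ∀ t > 0,
      -lam₁ * J t + J t ^ (1 + α) ≤ ∑ x ∈ I, μ x * φ₁ x * u' t x := by
    intro t ht
    have hjensen := rpow_arith_mean_le_arith_mean_rpow I _ _ hweight hφ₁_norm
      (hnonneg t ht.le) (p := 1 + α) (by linarith)
    rw [← sum_mul_graphLap_of_eigenfunction hsymm hwnn (fun x => (hμpos x).ne') hφ₁_zero
      hφ₁_eig (hzero t ht.le)]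
    calc _ ≤ ∑ x ∈ I, μ x * φ₁ x * graphLap ω μ (u t) x
          + ∑ x ∈ I, μ x * φ₁ x * u t x ^ (1 + α) := by gcongr
      _ = _ := by
          rw [← Finset.sum_add_distrib]
          exact Finset.sum_congr rfl fun x hx => by rw [heq t ht x hx]; ring
  have hJ0 : ∑ x ∈ I, μ x * a x * φ₁ x = J 0 :=
    Finset.sum_congr rfl fun x hx => by rw [hinit x hx]; ring
  exact (hbig.trans_eq hJ0).not_ge <| apply_zero_le_rpow_of_global_supersolution hlam₁_pos hα
    (continuousOn_finsetSum I fun x hx =>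
      continuousOn_const.mul (hcont x (graphInterior_subset hx)))
    (fun t ht => HasDerivAt.fun_sum fun x hx =>
      (hderiv x (graphInterior_subset hx) t ht).const_mul _)
    (fun t ht => Finset.sum_nonneg fun x hx => mul_nonneg (hweight x hx) (hnonneg t ht x hx))
    hsuper

/-- Blow-up for the Dirichlet problem `∂ₜu = Δ_Ω u + u^{1+α}` on `(0,∞) × Ω°`,
`u(0,·) = a` on `Ω°`, `u = 0` on `[0,∞) × ∂Ω`: if `α > 0` and
`∑_{x∈Ω°} μ(x) a(x) φ₁(x) > λ₁^{1/α}`, then there is no global solution. -/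
theorem blowup_dirichlet_power
    {V : Type*} [Countable V] (ω : V → V → ℝ) (μ : V → ℝ)
    (hsymm : ∀ x y, ω x y = ω y x)
    (hwnn : ∀ x y, 0 ≤ ω x y)
    (hμpos : ∀ x, 0 < μ x)
    (hlocfin : ∀ x, {y | 0 < ω x y}.Finite)
    (hdeg : ∀ x, ∃ y, 0 < ω x y)
    (hconn : ∀ x y, Relation.ReflTransGen (fun a b => 0 < ω a b) x y)
    (Dμ : ℝ) (hDμ : ∀ x, (∑' y, ω x y) / μ x ≤ Dμ)
    (Ω : Finset V) (hΩne : Ω.Nonempty) (hΩint : (graphInterior ω Ω).Nonempty)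
    (α : ℝ) (hα : 0 < α)
    -- the initial datum
    (a : V → ℝ)
    (ha_nonneg : ∀ x ∈ graphInterior ω Ω, 0 ≤ a x)
    (ha_nontriv : ∃ x ∈ graphInterior ω Ω, a x ≠ 0)
    -- `λ₁`, the smallest eigenvalue of `−Δ_Ω`, with positive normalized eigenfunction `φ₁`
    (lam₁ : ℝ) (hlam₁_pos : 0 < lam₁)
    (φ₁ : V → ℝ)
    (hφ₁_pos : ∀ x ∈ graphInterior ω Ω, 0 < φ₁ x)
    (hφ₁_zero : ∀ x ∉ graphInterior ω Ω, φ₁ x = 0)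
    (hφ₁_norm : ∑ x ∈ graphInterior ω Ω, μ x * φ₁ x = 1)
    (hφ₁_eig : ∀ x ∈ graphInterior ω Ω, graphLap ω μ φ₁ x = -lam₁ * φ₁ x)
    (hlam₁_min : ∀ (lam : ℝ) (ψ : V → ℝ), (∀ x ∉ graphInterior ω Ω, ψ x = 0) → ψ ≠ 0 →
      (∀ x ∈ graphInterior ω Ω, graphLap ω μ ψ x = -lam * ψ x) → lam₁ ≤ lam)
    -- the largeness condition on the initial datum
    (hbig : lam₁ ^ (1 / α) < ∑ x ∈ graphInterior ω Ω, μ x * a x * φ₁ x) :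
    -- conclusion: no global solution of the Dirichlet problem exists
    ¬ ∃ (u u' : ℝ → V → ℝ),
        (∀ x ∈ Ω, ContinuousOn (fun t => u t x) (Ici (0:ℝ))) ∧
        (∀ x ∈ Ω, ∀ t > (0:ℝ), HasDerivAt (fun s => u s x) (u' t x) t) ∧
        (∀ T > (0:ℝ), ∃ C, ∀ t ∈ Icc (0:ℝ) T, ∀ x ∈ Ω, |u t x| ≤ C) ∧
        (∀ t > (0:ℝ), ∀ x ∈ graphInterior ω Ω,
          u' t x = graphLap ω μ (u t) x + u t x ^ (1 + α)) ∧
        (∀ x ∈ graphInterior ω Ω, u 0 x = a x) ∧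
        (∀ t ≥ (0:ℝ), ∀ x ∈ graphBoundary ω Ω, u t x = 0) :=
  blowup_dirichlet_power_general ω μ hsymm hwnn hμpos Ω α hα a ha_nonneg lam₁ hlam₁_pos φ₁ hφ₁_pos
    hφ₁_zero hφ₁_norm hφ₁_eig hbig
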